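/- arXiv:2410.06917 — 10 statements merged into one kernel-verified Lean document; each statement's English description precedes it below -/
import Mathlib

section
/- Define a graph G to be Zykov-like if every nonempty induced subgraph of G contains a non-empty splitting stable set. Then every forest is Zykov-like. -/
/-- A stable (independent) set of vertices. -/
def SimpleGraph.IsStableSet {V : Type*} (G : SimpleGraph V) (A : Set V) : Prop :=
  ∀ ⦃u⦄, u ∈ A → ∀ ⦃v⦄, v ∈ A → ¬ G.Adj u v

/-- A splitting stable set: a stable set such that every vertex of `A` has at most one
neighbor in each connected component of `G \ A`. -/
def SimpleGraph.IsSplitting {V : Type*} (G : SimpleGraph V) (A : Set V) : Prop :=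
  G.IsStableSet A ∧ ∀ a ∈ A, ∀ u v : (Aᶜ : Set V),
    (G.induce (Aᶜ : Set V)).Reachable u v → G.Adj a ↑u → G.Adj a ↑v → u = v

/-- A strongly splitting stable set: additionally every vertex outside `S` has at most
one neighbor in `S`. -/
def SimpleGraph.IsStrongSplitting {V : Type*} (G : SimpleGraph V) (S : Set V) : Prop :=
  G.IsSplitting S ∧ ∀ v ∉ S, ∀ a ∈ S, ∀ b ∈ S, G.Adj v a → G.Adj v b → a = b

/-- A graph is Zykov-like if every nonempty induced subgraph contains a nonempty
splitting stable set. -/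
def SimpleGraph.ZykovLike {V : Type*} (G : SimpleGraph V) : Prop :=
  ∀ X : Set V, X.Nonempty → ∃ A : Set X, A.Nonempty ∧ (G.induce X).IsSplitting A

/-- A graph is Descartes-like if every nonempty induced subgraph contains a nonempty
strongly splitting stable set. -/
def SimpleGraph.DescartesLike {V : Type*} (G : SimpleGraph V) : Prop :=
  ∀ X : Set V, X.Nonempty → ∃ S : Set X, S.Nonempty ∧ (G.induce X).IsStrongSplitting S


private lemma forest_aux {V : Type*} (G : SimpleGraph V) (h : G.IsAcyclic)
    (X : Set V) (x : V) (hx : x ∈ X)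
    (u v : ↥(({⟨x, hx⟩} : Set X)ᶜ))
    (hr : ((G.induce X).induce ({⟨x, hx⟩} : Set X)ᶜ).Reachable u v)
    (hau : (G.induce X).Adj ⟨x, hx⟩ ↑u) (hav : (G.induce X).Adj ⟨x, hx⟩ ↑v) :
    u = v := by
  classical
  obtain ⟨w⟩ := hr
  let p := w.toPath
  let e : ((G.induce X).induce (({⟨x, hx⟩} : Set X)ᶜ)) ↪g G :=
    (SimpleGraph.Embedding.induce X).comp (SimpleGraph.Embedding.induce _)
  have hau' : G.Adj x ↑↑u := hau
  have hav' : G.Adj x ↑↑v := hav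
  have hxsup : x ∉ (p.val.map e.toHom).support := by
    rw [SimpleGraph.Walk.support_map]
    intro hmem
    obtain ⟨z, hz, hz2⟩ := List.mem_map.mp hmem
    have hzx : (↑↑z : V) = x := hz2
    exact z.prop (Subtype.ext hzx)
  have hQpath : (SimpleGraph.Walk.cons hau' (p.val.map e.toHom)).IsPath :=
    (SimpleGraph.Walk.map_isPath_of_injective e.injective p.prop).cons hxsup
  let P : G.Path x ↑↑v := ⟨SimpleGraph.Walk.cons hav' SimpleGraph.Walk.nil, by
    simp [SimpleGraph.Walk.isPath_def, hav'.ne]⟩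
  let Q : G.Path x ↑↑v := ⟨SimpleGraph.Walk.cons hau' (p.val.map e.toHom), hQpath⟩
  have := SimpleGraph.isAcyclic_iff_path_unique.mp h P Q
  have hlen : P.val.length = Q.val.length := by rw [this]
  simp [P, Q] at hlen
  have : (↑↑u : V) = ↑↑v := by
    have := SimpleGraph.Walk.eq_of_length_eq_zero (p := p.val.map e.toHom) (by have h2 : 1 = (p.val.map e.toHom).length + 1 := hlen; omega)
    exact this
  exact Subtype.ext (Subtype.ext this)

/-- Every forest is Zykov-like. -/
theorem forest_zykovLike {V : Type*} (G : SimpleGraph V) (h : G.IsAcyclic) :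
    G.ZykovLike := by
  intro X hX
  obtain ⟨x, hx⟩ := hX
  refine ⟨{⟨x, hx⟩}, ⟨⟨x, hx⟩, rfl⟩, ?_, ?_⟩
  · intro a ha b hb hadj
    simp only [Set.mem_singleton_iff] at ha hb
    subst ha; subst hb
    exact hadj.ne rfl
  · intro a ha u v hr hau hav
    simp only [Set.mem_singleton_iff] at ha
    subst ha
    exact forest_aux G h X x hx u v hr hau hav
end

section
/- Every bipartite graph is Zykov-like, i.e., every nonempty induced subgraph of a bipartite graph contains a non-empty splitting stable set. -/
/-- Every bipartite graph is Zykov-like. -/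
theorem bipartite_zykovLike {V : Type*} (G : SimpleGraph V) (h : G.Colorable 2) :
    G.ZykovLike := by
  intro X hX
  obtain ⟨C⟩ := h
  obtain ⟨x0, hx0⟩ := hX
  refine ⟨{x : X | C x.val = C x0}, ⟨⟨x0, hx0⟩, rfl⟩, ?_, ?_⟩
  · intro u hu v hv hadj
    exact C.valid hadj (hu.trans hv.symm)
  · intro a ha u v hr hau hav
    have key : ∀ x y z : Fin 2, x ≠ z → y ≠ z → x = y := by decide
    obtain ⟨w⟩ := hr
    cases w with
    | nil => rfl
    | cons hadj p =>
      rename_i b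
      exact absurd (key (C u.val.val) (C b.val.val) (C x0) u.prop b.prop)
        (C.valid hadj)
end

section
/- If H is obtained from a graph G by subdividing an edge (replacing an edge uv by a new vertex w adjacent exactly to u and v), and G is Zykov-like, then H is Zykov-like. -/
/-- Subdividing an edge of a Zykov-like graph yields a Zykov-like graph.
The subdivision of edge uv is modeled on `Option V`, where `none` is the new vertex w. -/
theorem zykovLike_subdivide {V : Type*} (G : SimpleGraph V) (u v : V) (huv : G.Adj u v)
    (H : SimpleGraph (Option V))
    (h1 : ∀ x y : V, H.Adj (some x) (some y) ↔
      (G.Adj x y ∧ ¬((x = u ∧ y = v) ∨ (x = v ∧ y = u))))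
    (h2 : ∀ x : V, H.Adj none (some x) ↔ (x = u ∨ x = v))
    (hG : G.ZykovLike) : H.ZykovLike := by
  classical
  intro X hX
  set X' : Set V := {x | some x ∈ X} with hX'def
  by_cases hX' : X'.Nonempty
  · -- main case
    obtain ⟨A', hA'ne, hA'stab, hA'split⟩ := hG X' hX'
    set A : Set ↥X := {p | ∃ a0 : ↥X', a0 ∈ A' ∧ p.val = some a0.val} with hAdef
    obtain ⟨a0w, ha0w⟩ := hA'ne
    refine ⟨A, ⟨⟨some a0w.val, a0w.property⟩, a0w, ha0w, rfl⟩, ?_, ?_⟩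
    · -- stability
      rintro p ⟨pa, hpa, hpv⟩ q ⟨qa, hqa, hqv⟩ hadj
      have hadj' : H.Adj (some pa.val) (some qa.val) := by
        rw [← hpv, ← hqv]; exact hadj
      exact hA'stab hpa hqa (((h1 _ _).mp hadj').1)
    · -- splitting
      rintro a ⟨a0, ha0A, ha0v⟩ p q hre hap haq
      have memX' : ∀ (r : ↥(Aᶜ : Set ↥X)) (x : V), r.val.val = some x → x ∈ X' := by
        intro r x hx
        have h := r.val.property
        rw [hx] at h
        exact h
      have nmemA' : ∀ (r : ↥(Aᶜ : Set ↥X)) (x : V) (hx : x ∈ X'),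
          r.val.val = some x → (⟨x, hx⟩ : ↥X') ∉ A' := by
        intro r x hx hrv hmem
        exact r.property ⟨⟨x, hx⟩, hmem, hrv⟩
      -- key reachability transfer lemma
      have key : ∀ (p q : ↥(Aᶜ : Set ↥X))
          (w : ((H.induce X).induce (Aᶜ : Set ↥X)).Walk p q)
          (y : V) (hy : y ∈ X') (hyA : (⟨y, hy⟩ : ↥X') ∉ A'), q.val.val = some y →
          ∀ (x : V) (hx : x ∈ X') (hxA : (⟨x, hx⟩ : ↥X') ∉ A'),
            (p.val.val = some x ∨ (p.val.val = none ∧ (x = u ∨ x = v))) →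
            ((G.induce X').induce (A'ᶜ : Set ↥X')).Reachable ⟨⟨x, hx⟩, hxA⟩ ⟨⟨y, hy⟩, hyA⟩ := by
        intro p q w
        induction w with
        | nil =>
          intro y hy hyA hq x hx hxA hp
          rcases hp with hp | hp
          · have hxy : x = y := by
              have : some x = some y := by rw [← hp, hq]
              exact Option.some.inj this
            subst hxy
            exact SimpleGraph.Reachable.refl _
          · rw [hp.1] at hq
            exact absurd hq (by simp)
        | cons h w' ih =>
          rename_i pp rr qq
          intro y hy hyA hq x hx hxA hp
          have hadj : H.Adj pp.val.val rr.val.val := h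
          rcases hrv : rr.val.val with _ | z
          · -- r is none
            rcases hp with hp | hp
            · rw [hp, hrv] at hadj
              have hxuv : x = u ∨ x = v := (h2 x).mp hadj.symm
              exact ih y hy hyA hq x hx hxA (Or.inr ⟨hrv, hxuv⟩)
            · rw [hp.1, hrv] at hadj
              exact absurd hadj (H.loopless.irrefl none)
          · -- r is some z
            have hz : z ∈ X' := memX' rr z hrv
            have hzA : (⟨z, hz⟩ : ↥X') ∉ A' := nmemA' rr z hz hrv
            have tail := ih y hy hyA hq z hz hzA (Or.inl hrv)
            rcases hp with hp | hp
            · rw [hp, hrv] at hadj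
              have hGxz : G.Adj x z := ((h1 _ _).mp hadj).1
              have hstep : ((G.induce X').induce (A'ᶜ : Set ↥X')).Adj ⟨⟨x, hx⟩, hxA⟩ ⟨⟨z, hz⟩, hzA⟩ := hGxz
              exact hstep.reachable.trans tail
            · rw [hp.1, hrv] at hadj
              have hzuv : z = u ∨ z = v := (h2 z).mp hadj
              by_cases hxz : x = z
              · subst hxz
                exact tail
              · have hGxz : G.Adj x z := by
                  rcases hp.2 with hxu | hxv <;> rcases hzuv with hzu | hzv
                  · exact absurd (hxu.trans hzu.symm) hxz
                  · rw [hxu, hzv]; exact huv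
                  · rw [hxv, hzu]; exact huv.symm
                  · exact absurd (hxv.trans hzv.symm) hxz
                have hstep : ((G.induce X').induce (A'ᶜ : Set ↥X')).Adj ⟨⟨x, hx⟩, hxA⟩ ⟨⟨z, hz⟩, hzA⟩ := hGxz
                exact hstep.reachable.trans tail
      -- adjacency facts
      have hadj_p : H.Adj (some a0.val) p.val.val := by rw [← ha0v]; exact hap
      have hadj_q : H.Adj (some a0.val) q.val.val := by rw [← ha0v]; exact haq
      -- asymmetric contradiction: p is none, q is some
      have asym : ∀ (p q : ↥(Aᶜ : Set ↥X)),
          ((H.induce X).induce (Aᶜ : Set ↥X)).Reachable p q →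
          H.Adj (some a0.val) p.val.val → H.Adj (some a0.val) q.val.val →
          p.val.val = none → ∀ y, q.val.val = some y → False := by
        intro p q hre hadjp hadjq hpn y hqy
        rw [hpn] at hadjp
        have ha0uv : a0.val = u ∨ a0.val = v := (h2 _).mp hadjp.symm
        rw [hqy] at hadjq
        have hGy := (h1 _ _).mp hadjq
        have hy : y ∈ X' := memX' q y hqy
        have hyA : (⟨y, hy⟩ : ↥X') ∉ A' := nmemA' q y hy hqy
        obtain ⟨w⟩ := hre
        cases w with
        | nil =>
          rw [hpn] at hqy
          exact absurd hqy (by simp)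
        | cons h w' =>
          rename_i rr
          have hadj : H.Adj p.val.val rr.val.val := h
          rw [hpn] at hadj
          rcases hrv : rr.val.val with _ | z
          · rw [hrv] at hadj
            exact H.loopless.irrefl none hadj
          · rw [hrv] at hadj
            have hzuv : z = u ∨ z = v := (h2 z).mp hadj
            have hz : z ∈ X' := memX' rr z hrv
            have hzA : (⟨z, hz⟩ : ↥X') ∉ A' := nmemA' rr z hz hrv
            have hza0 : z ≠ a0.val := by
              intro he
              exact hzA (by rw [show (⟨z, hz⟩ : ↥X') = a0 from Subtype.ext he]; exact ha0A)
            have hGa0z : G.Adj a0.val z := by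
              rcases ha0uv with h0u | h0v <;> rcases hzuv with hzu | hzv
              · exact absurd (hzu.trans h0u.symm) hza0
              · rw [h0u, hzv]; exact huv
              · rw [h0v, hzu]; exact huv.symm
              · exact absurd (hzv.trans h0v.symm) hza0
            have reach := key rr q w' y hy hyA hqy z hz hzA (Or.inl hrv)
            have adj1 : (G.induce X').Adj a0 (⟨z, hz⟩ : ↥X') := hGa0z
            have adj2 : (G.induce X').Adj a0 (⟨y, hy⟩ : ↥X') := hGy.1
            have eq := hA'split a0 ha0A ⟨⟨z, hz⟩, hzA⟩ ⟨⟨y, hy⟩, hyA⟩ reach adj1 adj2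
            have hzy : z = y := congrArg (fun t => t.val.val) eq
            rcases ha0uv with h0u | h0v <;> rcases hzuv with hzu | hzv
            · exact absurd (hzu.trans h0u.symm) hza0
            · exact hGy.2 (Or.inl ⟨h0u, by rw [← hzy, hzv]⟩)
            · exact hGy.2 (Or.inr ⟨h0v, by rw [← hzy, hzu]⟩)
            · exact absurd (hzv.trans h0v.symm) hza0
      rcases hpv : p.val.val with _ | x <;> rcases hqv : q.val.val with _ | y
      · exact Subtype.ext (Subtype.ext (by rw [hpv, hqv]))
      · exact (asym p q hre hadj_p hadj_q hpv y hqv).elim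
      · exact (asym q p hre.symm hadj_q hadj_p hqv x hpv).elim
      · have hx : x ∈ X' := memX' p x hpv
        have hxA : (⟨x, hx⟩ : ↥X') ∉ A' := nmemA' p x hx hpv
        have hy : y ∈ X' := memX' q y hqv
        have hyA : (⟨y, hy⟩ : ↥X') ∉ A' := nmemA' q y hy hqv
        obtain ⟨w⟩ := hre
        have reach := key p q w y hy hyA hqv x hx hxA (Or.inl hpv)
        rw [hpv] at hadj_p
        rw [hqv] at hadj_q
        have adj1 : (G.induce X').Adj a0 (⟨x, hx⟩ : ↥X') := ((h1 _ _).mp hadj_p).1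
        have adj2 : (G.induce X').Adj a0 (⟨y, hy⟩ : ↥X') := ((h1 _ _).mp hadj_q).1
        have eq := hA'split a0 ha0A ⟨⟨x, hx⟩, hxA⟩ ⟨⟨y, hy⟩, hyA⟩ reach adj1 adj2
        have hxy : x = y := congrArg (fun t => t.val.val) eq
        exact Subtype.ext (Subtype.ext (by rw [hpv, hqv, hxy]))
  · -- X has no `some` vertices: X = {none}
    obtain ⟨o, ho⟩ := hX
    have hnone : o = none := by
      cases o with
      | none => rfl
      | some x => exact absurd ⟨x, ho⟩ hX'
    subst hnone
    have hval : ∀ p : ↥X, p.val = none := by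
      intro p
      cases hpv : p.val with
      | none => rfl
      | some x =>
        exact absurd ⟨x, show some x ∈ X by rw [← hpv]; exact p.property⟩ hX'
    refine ⟨Set.univ, ⟨⟨none, ho⟩, trivial⟩, ?_, ?_⟩
    · intro p _ q _ hadj
      have hadj' : H.Adj p.val q.val := hadj
      rw [hval p, hval q] at hadj'
      exact H.loopless.irrefl none hadj'
    · intro a _ p q _ _ _
      exact absurd p.property (by simp)
end

section
/- If H is obtained from an arbitrary graph G by subdividing every edge exactly once, then H is bipartite, and hence Zykov-like. -/
/-- The graph obtained from G by subdividing every edge exactly once: vertices are the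
original vertices together with one vertex per edge, an original vertex being adjacent to
an edge-vertex iff it is an endpoint of that edge. -/
def onceSubdivision {V : Type*} (G : SimpleGraph V) : SimpleGraph (V ⊕ G.edgeSet) :=
  SimpleGraph.fromRel (fun a b =>
    match a, b with
    | Sum.inl v, Sum.inr e => v ∈ (e : Sym2 V)
    | _, _ => False)

lemma not_adj_inr_inr {V : Type*} (G : SimpleGraph V) (a b : G.edgeSet) :
    ¬ (onceSubdivision G).Adj (Sum.inr a) (Sum.inr b) := by
  simp [onceSubdivision, SimpleGraph.fromRel_adj]

lemma not_adj_inl_inl {V : Type*} (G : SimpleGraph V) (a b : V) :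
    ¬ (onceSubdivision G).Adj (Sum.inl a) (Sum.inl b) := by
  simp [onceSubdivision, SimpleGraph.fromRel_adj]

lemma isInr_of_not_isInl {V E : Type*} (x : V ⊕ E) (h : ¬ ∃ v, x = Sum.inl v) :
    ∃ e, x = Sum.inr e := by
  cases x with
  | inl v => exact absurd ⟨v, rfl⟩ h
  | inr e => exact ⟨e, rfl⟩

/-- Subdividing every edge exactly once yields a bipartite, hence
Zykov-like, graph. -/
theorem onceSubdivision_bipartite_zykovLike {V : Type*} (G : SimpleGraph V) :
    (onceSubdivision G).Colorable 2 ∧ (onceSubdivision G).ZykovLike := by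
  constructor
  · refine ⟨SimpleGraph.Coloring.mk (fun x => match x with | Sum.inl _ => 0 | Sum.inr _ => 1) ?_⟩
    rintro (a|a) (b|b) h
    · exact absurd h (not_adj_inl_inl G a b)
    · simp
    · simp
    · exact absurd h (not_adj_inr_inr G a b)
  · intro X hX
    by_cases h : ∃ x : X, ∃ v, (x : V ⊕ G.edgeSet) = Sum.inl v
    · -- take all original vertices in X
      refine ⟨{x : X | ∃ v, (x : V ⊕ G.edgeSet) = Sum.inl v}, ?_, ?_, ?_⟩
      · obtain ⟨x, hx⟩ := h
        exact ⟨x, hx⟩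
      · rintro u ⟨a, ha⟩ v ⟨b, hb⟩ hadj
        have : (onceSubdivision G).Adj ↑↑u ↑↑v := hadj
        rw [ha, hb] at this
        exact not_adj_inl_inl G a b this
      · rintro a ha u v ⟨w⟩ h1 h2
        -- the complement consists of inr vertices only, so the induced graph has no edges
        induction w with
        | nil => rfl
        | cons hadj _ _ =>
          rename_i x y _ _ _
          obtain ⟨ex, hex⟩ := isInr_of_not_isInl _ x.2
          obtain ⟨ey, hey⟩ := isInr_of_not_isInl _ y.2
          have : (onceSubdivision G).Adj ↑↑↑x ↑↑↑y := hadj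
          rw [hex, hey] at this
          exact absurd this (not_adj_inr_inr G ex ey)
    · -- X contains only edge-vertices: take all of X
      refine ⟨Set.univ, ?_, ?_, ?_⟩
      · obtain ⟨x, hx⟩ := hX
        exact ⟨⟨x, hx⟩, trivial⟩
      · intro u _ v _ hadj
        push_neg at h
        obtain ⟨eu, heu⟩ := isInr_of_not_isInl (↑u : V ⊕ G.edgeSet) (by
          rintro ⟨w, hw⟩; exact (h u w hw))
        obtain ⟨ev, hev⟩ := isInr_of_not_isInl (↑v : V ⊕ G.edgeSet) (by
          rintro ⟨w, hw⟩; exact (h v w hw))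
        have : (onceSubdivision G).Adj ↑↑u ↑↑v := hadj
        rw [heu, hev] at this
        exact not_adj_inr_inr G eu ev this
      · intro a _ u
        exact absurd u.2 (by simp)
end

section
/- A finite graph G is Zykov-like if and only if its vertex set can be partitioned into stable sets A_1, ..., A_n such that for each k, A_k is a non-empty splitting stable set of the induced subgraph on A_k ∪ A_{k+1} ∪ ... ∪ A_n (unless V(G) is empty). -/
lemma splitting_mono {V : Type*} (G : SimpleGraph V) {X Y : Set V} (A : Set V) (hXY : X ⊆ Y)
    (h : (G.induce Y).IsSplitting (Subtype.val ⁻¹' A)) :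
    (G.induce X).IsSplitting (Subtype.val ⁻¹' A) := by
  obtain ⟨hstab, hspl⟩ := h
  constructor
  · intro u hu v hv hadj
    exact hstab (u := ⟨u.1, hXY u.2⟩) hu (v := ⟨v.1, hXY v.2⟩) hv hadj
  · intro a ha u v hr hau hav
    let f : ((G.induce X).induce ((Subtype.val ⁻¹' A)ᶜ : Set X)) →g
        ((G.induce Y).induce ((Subtype.val ⁻¹' A)ᶜ : Set Y)) :=
      ⟨fun w => ⟨⟨w.1.1, hXY w.1.2⟩, w.2⟩, fun hadj => hadj⟩
    have heq := hspl ⟨a.1, hXY a.2⟩ ha (f u) (f v) (hr.map f) hau hav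
    have : u.1.1 = v.1.1 := congrArg (fun w => w.1.1) heq
    exact Subtype.ext (Subtype.ext this)

lemma aux_partition {V : Type*} [Fintype V] (G : SimpleGraph V) (hG : G.ZykovLike) :
    ∀ (m : ℕ) (X : Set V), X.ncard ≤ m → X.Nonempty →
      ∃ (n : ℕ) (A : Fin n → Set V),
        (∀ x ∈ X, ∃! i : Fin n, x ∈ A i) ∧ (∀ i, A i ⊆ X) ∧
        ∀ k : Fin n,
          (Subtype.val ⁻¹' A k : Set (⋃ i ∈ Set.Ici k, A i)).Nonempty ∧
          (G.induce (⋃ i ∈ Set.Ici k, A i)).IsSplitting (Subtype.val ⁻¹' A k) := by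
  intro m
  induction m with
  | zero =>
    intro X hcard hne
    have : X.ncard = 0 := le_antisymm hcard (Nat.zero_le _)
    rw [Set.ncard_eq_zero (Set.toFinite X)] at this
    exact absurd this (Set.nonempty_iff_ne_empty.mp hne)
  | succ m ih =>
    intro X hcard hne
    obtain ⟨A0, hA0ne, hA0spl⟩ := hG X hne
    set A' : Set V := Subtype.val '' A0 with hA'def
    have hA'X : A' ⊆ X := by rintro x ⟨y, _, rfl⟩; exact y.2
    have hA'ne : A'.Nonempty := hA0ne.image _
    have hpre : (Subtype.val ⁻¹' A' : Set X) = A0 :=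
      Set.preimage_image_eq A0 Subtype.val_injective
    by_cases hrest : (X \ A').Nonempty
    · -- recursive case
      have hss : X \ A' ⊂ X := by
        refine HasSubset.Subset.ssubset_of_ne Set.diff_subset fun hEq => ?_
        obtain ⟨a, ha⟩ := hA'ne
        have ha' : a ∈ X := hA'X ha
        rw [← hEq] at ha'
        exact ha'.2 ha
      have hlt : (X \ A').ncard ≤ m := by
        have := Set.ncard_lt_ncard hss (Set.toFinite X)
        omega
      obtain ⟨n, B, hBcov, hBsub, hBtail⟩ := ih (X \ A') hlt hrest
      refine ⟨n + 1, Fin.cons A' B, ?_, ?_, ?_⟩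
      · -- coverage
        intro x hx
        by_cases hxA : x ∈ A'
        · refine ⟨0, hxA, fun j => ?_⟩
          induction j using Fin.cases with
          | zero => exact fun _ => rfl
          | succ j' => exact fun hj' => absurd hxA (hBsub j' (by simpa using hj')).2
        · obtain ⟨j, hj, hjuniq⟩ := hBcov x ⟨hx, hxA⟩
          refine ⟨j.succ, by simpa using hj, fun i => ?_⟩
          induction i using Fin.cases with
          | zero => exact fun h0 => absurd (by simpa using h0) hxA
          | succ i' => exact fun hi' => congrArg Fin.succ (hjuniq i' (by simpa using hi'))
      · -- subsets
        intro i
        induction i using Fin.cases with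
        | zero => simpa using hA'X
        | succ i' => simpa using (hBsub i').trans Set.diff_subset
      · -- tails
        intro k
        induction k using Fin.cases with
        | zero =>
          -- k = 0 : tail is X
          have htail : (⋃ i ∈ Set.Ici (0 : Fin (n+1)), (Fin.cons A' B : Fin (n+1) → Set V) i) = X := by
            apply Set.Subset.antisymm
            · refine Set.iUnion₂_subset fun i _ => ?_
              induction i using Fin.cases with
              | zero => simpa using hA'X
              | succ i' => simpa using (hBsub i').trans Set.diff_subset
            · intro x hx
              by_cases hxA : x ∈ A'
              · exact Set.mem_biUnion (Set.mem_Ici.mpr (Fin.zero_le 0))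
                  (show x ∈ (Fin.cons A' B : Fin (n+1) → Set V) 0 by
                    rw [Fin.cons_zero]; exact hxA)
              · obtain ⟨j, hj, _⟩ := hBcov x ⟨hx, hxA⟩
                exact Set.mem_biUnion (Set.mem_Ici.mpr (Fin.zero_le _))
                  (show x ∈ (Fin.cons A' B : Fin (n+1) → Set V) j.succ by simpa using hj)
          rw [htail, Fin.cons_zero, hpre]
          exact ⟨hA0ne, hA0spl⟩
        | succ i =>
          -- k = i.succ : tail equals the B-tail at i
          have htail : (⋃ j ∈ Set.Ici i.succ, (Fin.cons A' B : Fin (n+1) → Set V) j) = ⋃ j ∈ Set.Ici i, B j := by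
            ext x
            simp only [Set.mem_iUnion, Set.mem_Ici, exists_prop]
            constructor
            · rintro ⟨j, hij, hx⟩
              have hj0 : j ≠ 0 := fun h => by
                rw [h] at hij
                exact absurd (le_antisymm (Fin.zero_le _) hij) (Fin.succ_ne_zero i).symm
              obtain ⟨j', rfl⟩ := Fin.exists_succ_eq.mpr hj0
              exact ⟨j', Fin.succ_le_succ_iff.mp hij, by simpa using hx⟩
            · rintro ⟨j, hij, hx⟩
              exact ⟨j.succ, Fin.succ_le_succ_iff.mpr hij, by simpa using hx⟩
          rw [htail, Fin.cons_succ]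
          exact hBtail i
    · -- X = A'
      have hXA : X = A' := by
        have : X \ A' = ∅ := Set.not_nonempty_iff_eq_empty.mp hrest
        exact le_antisymm (Set.diff_eq_empty.mp this) hA'X
      refine ⟨1, fun _ => A', ?_, fun _ => hA'X, ?_⟩
      · intro x hx
        exact ⟨0, hXA ▸ hx, fun j _ => Subsingleton.elim _ _⟩
      · intro k
        have htail : (⋃ i ∈ Set.Ici k, (fun _ => A') i) = X := by
          apply Set.Subset.antisymm
          · exact Set.iUnion₂_subset fun i _ => hA'X
          · intro x hx
            exact Set.mem_biUnion (Set.mem_Ici.mpr (le_refl k)) (hXA ▸ hx)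
        rw [htail]
        simp only []
        rw [hpre]
        exact ⟨hA0ne, hA0spl⟩

/-- A finite graph on a nonempty vertex set is Zykov-like iff its vertex set
can be partitioned into stable sets A_0, ..., A_{n-1} such that each A_k is a nonempty
splitting stable set of the subgraph induced by A_k ∪ A_{k+1} ∪ ... ∪ A_{n-1}. -/
theorem zykovLike_iff_partition {V : Type*} [Fintype V] [Nonempty V] (G : SimpleGraph V) :
    G.ZykovLike ↔
      ∃ (n : ℕ) (A : Fin n → Set V),
        (∀ x : V, ∃! i : Fin n, x ∈ A i) ∧
        ∀ k : Fin n,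
          (Subtype.val ⁻¹' A k : Set (⋃ i ∈ Set.Ici k, A i)).Nonempty ∧
          (G.induce (⋃ i ∈ Set.Ici k, A i)).IsSplitting
            (Subtype.val ⁻¹' A k) := by
  constructor
  · intro hG
    obtain ⟨n, A, hcov, hsub, htail⟩ :=
      aux_partition G hG (Set.univ.ncard) Set.univ le_rfl Set.univ_nonempty
    exact ⟨n, A, fun x => hcov x (Set.mem_univ x), htail⟩
  · rintro ⟨n, A, hcov, htail⟩ X hXne
    classical
    obtain ⟨x0, hx0⟩ := hXne
    obtain ⟨i0, hi0, _⟩ := hcov x0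
    have hSne : (Finset.univ.filter (fun i : Fin n => (A i ∩ X).Nonempty)).Nonempty :=
      ⟨i0, by simp only [Finset.mem_filter, Finset.mem_univ, true_and]; exact ⟨x0, hi0, hx0⟩⟩
    set k := (Finset.univ.filter (fun i : Fin n => (A i ∩ X).Nonempty)).min' hSne with hk
    have hkmin : ∀ i, (A i ∩ X).Nonempty → k ≤ i := fun i hi =>
      Finset.min'_le _ i (by simp only [Finset.mem_filter, Finset.mem_univ, true_and]; exact hi)
    have hkX : (A k ∩ X).Nonempty :=
      (Finset.mem_filter.mp ((Finset.univ.filter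
        (fun i : Fin n => (A i ∩ X).Nonempty)).min'_mem hSne)).2
    have hXsub : X ⊆ ⋃ i ∈ Set.Ici k, A i := by
      intro x hx
      obtain ⟨i, hi, _⟩ := hcov x
      exact Set.mem_biUnion (Set.mem_Ici.mpr (hkmin i ⟨x, hi, hx⟩)) hi
    refine ⟨Subtype.val ⁻¹' A k, ?_, ?_⟩
    · obtain ⟨y, hyA, hyX⟩ := hkX
      exact ⟨⟨y, hyX⟩, hyA⟩
    · exact splitting_mono G (A k) hXsub (htail k).2
end

section
/- In any graph containing the graph H as an induced subgraph, where H consists of paths v-a-v', v-a'-v', v'-a''-v'', v'-a'''-v'' together with the edge vv'', every splitting stable set A of the graph satisfies A ∩ V(H) = ∅ or A ∩ V(H) = {a, a', a'', a'''}. -/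
/-- The edge set of the graph H, on vertices 0 = v, 1 = v', 2 = v'', 3 = a, 4 = a',
5 = a'', 6 = a'''. -/
def gadgetHEdges : Set (Sym2 (Fin 7)) :=
  {s(0, 3), s(0, 4), s(3, 1), s(4, 1), s(1, 5), s(1, 6), s(5, 2), s(6, 2), s(0, 2)}

/-- if G contains H as an induced subgraph (via the injective map f,
inducing exactly the edges of H), then every splitting stable set A of G satisfies
A ∩ V(H) = ∅ or A ∩ V(H) = {a, a', a'', a'''}. -/
theorem splitting_inter_gadgetH {V : Type*} (G : SimpleGraph V) (f : Fin 7 → V)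
    (hinj : Function.Injective f)
    (hadj : ∀ i j : Fin 7, G.Adj (f i) (f j) ↔ s(i, j) ∈ gadgetHEdges)
    (A : Set V) (hA : G.IsSplitting A) :
    A ∩ Set.range f = ∅ ∨ A ∩ Set.range f = {f 3, f 4, f 5, f 6} := by
  obtain ⟨hstab, hsplit⟩ := hA
  have adj : ∀ i j : Fin 7, s(i, j) ∈ gadgetHEdges → G.Adj (f i) (f j) :=
    fun i j h => (hadj i j).2 h
  have a03 : G.Adj (f 0) (f 3) := adj 0 3 (by simp [gadgetHEdges])
  have a04 : G.Adj (f 0) (f 4) := adj 0 4 (by simp [gadgetHEdges])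
  have a31 : G.Adj (f 3) (f 1) := adj 3 1 (by simp [gadgetHEdges])
  have a41 : G.Adj (f 4) (f 1) := adj 4 1 (by simp [gadgetHEdges])
  have a15 : G.Adj (f 1) (f 5) := adj 1 5 (by simp [gadgetHEdges])
  have a16 : G.Adj (f 1) (f 6) := adj 1 6 (by simp [gadgetHEdges])
  have a52 : G.Adj (f 5) (f 2) := adj 5 2 (by simp [gadgetHEdges])
  have a62 : G.Adj (f 6) (f 2) := adj 6 2 (by simp [gadgetHEdges])
  have a02 : G.Adj (f 0) (f 2) := adj 0 2 (by simp [gadgetHEdges])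
  have step : ∀ {x y : V} (hx : x ∉ A) (hy : y ∉ A), G.Adj x y →
      (G.induce (Aᶜ : Set V)).Reachable ⟨x, hx⟩ ⟨y, hy⟩ :=
    fun hx hy h => SimpleGraph.Adj.reachable h
  have key : ∀ a ∈ A, ∀ (x y : V) (hx : x ∉ A) (hy : y ∉ A), G.Adj a x → G.Adj a y →
      (G.induce (Aᶜ : Set V)).Reachable ⟨x, hx⟩ ⟨y, hy⟩ → x = y := by
    intro a ha x y hx hy hax hay hr
    exact congrArg Subtype.val (hsplit a ha ⟨x, hx⟩ ⟨y, hy⟩ hr hax hay)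
  have ne34 : f 3 ≠ f 4 := hinj.ne (by decide)
  have ne56 : f 5 ≠ f 6 := hinj.ne (by decide)
  have ne01 : f 0 ≠ f 1 := hinj.ne (by decide)
  have ne12 : f 1 ≠ f 2 := hinj.ne (by decide)
  -- v is not in A
  have h0 : f 0 ∉ A := by
    intro h0
    by_cases h1 : f 1 ∈ A
    · have h5 : f 5 ∉ A := fun h => hstab h1 h a15
      have h6 : f 6 ∉ A := fun h => hstab h1 h a16
      have h2 : f 2 ∉ A := fun h => hstab h0 h a02
      exact ne56 (key (f 1) h1 (f 5) (f 6) h5 h6 a15 a16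
        ((step h5 h2 a52).trans (step h2 h6 a62.symm)))
    · have h3 : f 3 ∉ A := fun h => hstab h0 h a03
      have h4 : f 4 ∉ A := fun h => hstab h0 h a04
      exact ne34 (key (f 0) h0 (f 3) (f 4) h3 h4 a03 a04
        ((step h3 h1 a31).trans (step h1 h4 a41.symm)))
  -- v'' is not in A
  have h2 : f 2 ∉ A := by
    intro h2
    by_cases h1 : f 1 ∈ A
    · have h3 : f 3 ∉ A := fun h => hstab h1 h a31.symm
      have h4 : f 4 ∉ A := fun h => hstab h1 h a41.symm
      exact ne34 (key (f 1) h1 (f 3) (f 4) h3 h4 a31.symm a41.symm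
        ((step h3 h0 a03.symm).trans (step h0 h4 a04)))
    · have h5 : f 5 ∉ A := fun h => hstab h h2 a52
      have h6 : f 6 ∉ A := fun h => hstab h h2 a62
      exact ne56 (key (f 2) h2 (f 5) (f 6) h5 h6 a52.symm a62.symm
        ((step h5 h1 a15.symm).trans (step h1 h6 a16)))
  -- v' is not in A
  have h1 : f 1 ∉ A := by
    intro h1
    have h3 : f 3 ∉ A := fun h => hstab h1 h a31.symm
    have h4 : f 4 ∉ A := fun h => hstab h1 h a41.symm
    exact ne34 (key (f 1) h1 (f 3) (f 4) h3 h4 a31.symm a41.symm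
      ((step h3 h0 a03.symm).trans (step h0 h4 a04)))
  -- implications among the four middle vertices
  have i34 : f 3 ∈ A → f 4 ∈ A := by
    intro h3
    by_contra h4
    exact ne01 (key (f 3) h3 (f 0) (f 1) h0 h1 a03.symm a31
      ((step h0 h4 a04).trans (step h4 h1 a41)))
  have i43 : f 4 ∈ A → f 3 ∈ A := by
    intro h4
    by_contra h3
    exact ne01 (key (f 4) h4 (f 0) (f 1) h0 h1 a04.symm a41
      ((step h0 h3 a03).trans (step h3 h1 a31)))
  have i56 : f 5 ∈ A → f 6 ∈ A := by
    intro h5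
    by_contra h6
    exact ne12 (key (f 5) h5 (f 1) (f 2) h1 h2 a15.symm a52
      ((step h1 h6 a16).trans (step h6 h2 a62)))
  have i65 : f 6 ∈ A → f 5 ∈ A := by
    intro h6
    by_contra h5
    exact ne12 (key (f 6) h6 (f 1) (f 2) h1 h2 a16.symm a62
      ((step h1 h5 a15).trans (step h5 h2 a52)))
  have i35 : f 3 ∈ A → f 5 ∈ A := by
    intro h3
    by_contra h5
    exact ne01 (key (f 3) h3 (f 0) (f 1) h0 h1 a03.symm a31
      (((step h0 h2 a02).trans (step h2 h5 a52.symm)).trans (step h5 h1 a15.symm)))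
  have i53 : f 5 ∈ A → f 3 ∈ A := by
    intro h5
    by_contra h3
    exact ne12 (key (f 5) h5 (f 1) (f 2) h1 h2 a15.symm a52
      (((step h1 h3 a31.symm).trans (step h3 h0 a03.symm)).trans (step h0 h2 a02)))
  by_cases hc : f 3 ∈ A ∨ f 4 ∈ A ∨ f 5 ∈ A ∨ f 6 ∈ A
  · right
    have hall : f 3 ∈ A ∧ f 4 ∈ A ∧ f 5 ∈ A ∧ f 6 ∈ A := by
      rcases hc with h | h | h | h
      · exact ⟨h, i34 h, i35 h, i56 (i35 h)⟩
      · exact ⟨i43 h, h, i35 (i43 h), i56 (i35 (i43 h))⟩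
      · exact ⟨i53 h, i34 (i53 h), h, i56 h⟩
      · exact ⟨i53 (i65 h), i34 (i53 (i65 h)), i65 h, h⟩
    obtain ⟨g3, g4, g5, g6⟩ := hall
    ext x
    constructor
    · rintro ⟨hxA, i, rfl⟩
      fin_cases i
      · exact absurd hxA h0
      · exact absurd hxA h1
      · exact absurd hxA h2
      · exact Or.inl rfl
      · exact Or.inr (Or.inl rfl)
      · exact Or.inr (Or.inr (Or.inl rfl))
      · exact Or.inr (Or.inr (Or.inr rfl))
    · rintro (rfl | rfl | rfl | rfl)
      · exact ⟨g3, 3, rfl⟩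
      · exact ⟨g4, 4, rfl⟩
      · exact ⟨g5, 5, rfl⟩
      · exact ⟨g6, 6, rfl⟩
  · left
    push_neg at hc
    obtain ⟨n3, n4, n5, n6⟩ := hc
    ext x
    simp only [Set.mem_inter_iff, Set.mem_empty_iff_false, iff_false]
    rintro ⟨hxA, i, rfl⟩
    fin_cases i
    · exact h0 hxA
    · exact h1 hxA
    · exact h2 hxA
    · exact n3 hxA
    · exact n4 hxA
    · exact n5 hxA
    · exact n6 hxA
end

section
/- The graph F', consisting of a 5-cycle u_1u_2u_3u_4u_5 together with vertices w_1, w_2, w_3, where w_1 is adjacent to u_1 and u_4, w_2 is adjacent to u_1, u_3 and w_3, and w_3 is adjacent to u_4 and w_2, has no non-empty splitting stable set, and hence is not Zykov-like. -/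
/-- The graph F' on vertices 0..4 = u_1..u_5 and 5 = w_1, 6 = w_2, 7 = w_3. -/
def graphF' : SimpleGraph (Fin 8) :=
  SimpleGraph.fromRel (fun i j =>
    s(i, j) ∈ ({s(0, 1), s(1, 2), s(2, 3), s(3, 4), s(4, 0), s(0, 5), s(0, 6),
      s(6, 7), s(5, 3), s(7, 3), s(6, 2)} : Set (Sym2 (Fin 8))))

open SimpleGraph

instance : DecidableRel graphF'.Adj := fun a b => by
  unfold graphF'
  rw [SimpleGraph.fromRel_adj]
  simp only [Set.mem_insert_iff, Set.mem_singleton_iff]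
  infer_instance

/-- Boolean adjacency table for `graphF'`. -/
def adjB (i j : Fin 8) : Bool :=
  (i.val, j.val) ∈ [(0,1),(1,2),(2,3),(3,4),(4,0),(0,5),(0,6),(6,7),(5,3),(7,3),(6,2),
    (1,0),(2,1),(3,2),(4,3),(0,4),(5,0),(6,0),(7,6),(3,5),(3,7),(2,6)]

lemma adjB_iff : ∀ a b : Fin 8, graphF'.Adj a b ↔ adjB a b = true := by decide

/-- `graphF'` with the vertices of `A` isolated. -/
def GA (A : Finset (Fin 8)) : SimpleGraph (Fin 8) where
  Adj u v := adjB u v = true ∧ u ∉ A ∧ v ∉ A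
  symm := by
    constructor
    rintro u v ⟨h, h1, h2⟩
    exact ⟨(adjB_iff v u).1 ((adjB_iff u v).2 h).symm, h2, h1⟩
  loopless := ⟨fun v h => graphF'.loopless.irrefl v ((adjB_iff v v).2 h.1)⟩

instance (A : Finset (Fin 8)) : DecidableRel (GA A).Adj := fun u v =>
  inferInstanceAs (Decidable (_ ∧ _ ∧ _))

/-- Fueled adjacency closure. -/
def clos (G : SimpleGraph (Fin 8)) [DecidableRel G.Adj] : ℕ → Finset (Fin 8) → Finset (Fin 8)
  | 0, s => s
  | n + 1, s => clos G n (s ∪ Finset.univ.filter fun v => ∃ u ∈ s, G.Adj u v)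

lemma clos_sound (G : SimpleGraph (Fin 8)) [DecidableRel G.Adj] :
    ∀ (n : ℕ) (s : Finset (Fin 8)) (v : Fin 8), v ∈ clos G n s → ∃ u ∈ s, G.Reachable u v := by
  intro n
  induction n with
  | zero => exact fun s v h => ⟨v, h, Reachable.refl v⟩
  | succ n ih =>
    intro s v h
    obtain ⟨u, hu, hr⟩ := ih _ v h
    rcases Finset.mem_union.1 hu with hu | hu
    · exact ⟨u, hu, hr⟩
    · obtain ⟨w, hw, hadj⟩ := (Finset.mem_filter.1 hu).2
      exact ⟨w, hw, hadj.reachable.trans hr⟩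

set_option maxHeartbeats 4000000 in
set_option maxRecDepth 20000 in
lemma big_check : ∀ A : Finset (Fin 8), A.Nonempty →
    (∀ u ∈ A, ∀ v ∈ A, adjB u v = false) →
    ∃ a ∈ A, ∃ u, u ∉ A ∧ adjB a u = true ∧
      ∃ v ∈ clos (GA A) 6 {u}, v ∉ A ∧ v ≠ u ∧ adjB a v = true := by decide

/-- Reachability in `GA B` transfers to the induced subgraph on the complement. -/
lemma GA_reach {A : Set (Fin 8)} {B : Finset (Fin 8)} (hB : ∀ y, y ∈ B ↔ y ∈ A) :
    ∀ {u v : Fin 8}, (GA B).Reachable u v → ∀ (hu : u ∈ (Aᶜ : Set (Fin 8)))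
      (hv : v ∈ (Aᶜ : Set (Fin 8))),
      (graphF'.induce (Aᶜ : Set (Fin 8))).Reachable ⟨u, hu⟩ ⟨v, hv⟩ := by
  intro u v h
  obtain ⟨w⟩ := h
  induction w with
  | nil => exact fun hu hv => Reachable.refl _
  | @cons u b v h p ih =>
    intro hu hv
    have hb : b ∈ (Aᶜ : Set (Fin 8)) := fun hbA => h.2.2 ((hB b).2 hbA)
    have hadj : (graphF'.induce (Aᶜ : Set (Fin 8))).Adj ⟨u, hu⟩ ⟨b, hb⟩ := by
      exact (adjB_iff u b).2 h.1
    exact hadj.reachable.trans (ih hb hv)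

lemma no_splitting : ¬ ∃ A : Set (Fin 8), A.Nonempty ∧ graphF'.IsSplitting A := by
  rintro ⟨A, ⟨x, hx⟩, hstab, hsplit⟩
  have hfin : A.Finite := Set.toFinite A
  set B := hfin.toFinset with hBdef
  have hB : ∀ y, y ∈ B ↔ y ∈ A := fun y => hfin.mem_toFinset
  obtain ⟨a, ha, u, hu, hau, v, hvclos, hv, hvu, hav⟩ :=
    big_check B ⟨x, (hB x).2 hx⟩ (fun u hu v hv => by
      by_contra hcon
      exact hstab ((hB u).1 hu) ((hB v).1 hv)
        ((adjB_iff u v).2 (Bool.not_eq_false _ ▸ hcon)))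
  obtain ⟨u', hu', hr⟩ := clos_sound (GA B) 6 {u} v hvclos
  rw [Finset.mem_singleton] at hu'
  replace hr : (GA B).Reachable u v := hu' ▸ hr
  have huA : u ∈ (Aᶜ : Set (Fin 8)) := fun h => hu ((hB u).2 h)
  have hvA : v ∈ (Aᶜ : Set (Fin 8)) := fun h => hv ((hB v).2 h)
  have := hsplit a ((hB a).1 ha) ⟨u, huA⟩ ⟨v, hvA⟩ (GA_reach hB hr huA hvA)
    ((adjB_iff a u).2 hau) ((adjB_iff a v).2 hav)
  exact hvu (congrArg Subtype.val this).symm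

/-- F' has no nonempty splitting stable set, and hence is not Zykov-like. -/
theorem graphF'_not_zykovLike :
    (¬ ∃ A : Set (Fin 8), A.Nonempty ∧ graphF'.IsSplitting A) ∧ ¬ graphF'.ZykovLike := by
  refine ⟨no_splitting, fun h => ?_⟩
  obtain ⟨A, hne, hstab, hsplit⟩ := h Set.univ ⟨0, trivial⟩
  apply no_splitting
  refine ⟨Subtype.val '' A, hne.image _, ?_, ?_⟩
  · rintro u ⟨a, ha, rfl⟩ v ⟨b, hb, rfl⟩ hadj
    exact hstab ha hb (by exact hadj)
  · rintro x ⟨a₀, ha₀, rfl⟩ u v hre hxu hxv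
    let e : ((Subtype.val '' A)ᶜ : Set (Fin 8)) → ((Aᶜ : Set (Set.univ : Set (Fin 8))) : Set _) :=
      fun w => ⟨⟨w.1, trivial⟩, fun hmem => w.2 ⟨⟨w.1, trivial⟩, hmem, rfl⟩⟩
    let f : graphF'.induce ((Subtype.val '' A)ᶜ : Set (Fin 8)) →g
        (graphF'.induce (Set.univ : Set (Fin 8))).induce (Aᶜ : Set _) :=
      ⟨e, fun {p q} hpq => by exact hpq⟩
    have := hsplit a₀ ha₀ (e u) (e v) (hre.map f) (by exact hxu) (by exact hxv)
    exact Subtype.ext (congrArg (fun z => z.1.1) this)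
end

section
/- If C is a cycle in a graph G and S is a strong splitting stable set of G, then S contains either no vertex of C or at least two vertices of C that are at distance at least 3 along C. -/
/-- if C is a cycle of G and S is a strong splitting stable set of G, then S
contains either no vertex of C or two vertices of C at distance at least 3 along C. -/
theorem strongSplitting_cycle {V : Type*} (G : SimpleGraph V) (S : Set V)
    (hS : G.IsStrongSplitting S) (k : ℕ) (hk : 3 ≤ k) (c : ZMod k → V)
    (hinj : Function.Injective c) (hadj : ∀ i, G.Adj (c i) (c (i + 1))) :
    (∀ i, c i ∉ S) ∨
      ∃ i j : ZMod k, c i ∈ S ∧ c j ∈ S ∧ 3 ≤ min (i - j).val (j - i).val := by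
  haveI : NeZero k := ⟨by omega⟩
  by_contra hcon
  push_neg at hcon
  obtain ⟨⟨i, hi⟩, h2⟩ := hcon
  have hstab := hS.1.1
  have h2z : (2 : ZMod k) ≠ 0 := by
    intro h
    have hd : (k : ℕ) ∣ 2 := (ZMod.natCast_eq_zero_iff 2 k).mp (by exact_mod_cast h)
    have := Nat.le_of_dvd (by norm_num) hd
    omega
  -- no two cycle vertices in S at distance exactly 2
  have key : ∀ p q : ZMod k, c p ∈ S → c q ∈ S → q ≠ p + 2 := by
    intro p q hp hq hpq
    have hmid : c (p + 1) ∉ S := fun h => hstab hp h (hadj p)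
    have hadj2 : G.Adj (c (p + 1)) (c q) := by
      rw [hpq]
      have := hadj (p + 1)
      convert this using 2
      ring
    have := hS.2 (c (p + 1)) hmid (c p) hp (c q) hq (hadj p).symm hadj2
    have hpq2 : p = q := hinj this
    rw [hpq2] at hpq
    exact h2z (by linear_combination -hpq)
  -- no two cycle vertices in S at distance 1
  have key1 : ∀ p q : ZMod k, c p ∈ S → c q ∈ S → q ≠ p + 1 := by
    intro p q hp hq hpq
    rw [hpq] at hq
    exact hstab hp hq (hadj p)
  -- S ∩ C = {c i}
  have cast_val : ∀ x : ZMod k, ((x.val : ℕ) : ZMod k) = x := fun x => by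
    simp [ZMod.natCast_val, ZMod.cast_id]
  have huniq : ∀ j : ZMod k, c j ∈ S → j = i := by
    intro j hj
    by_contra hne
    have hd := h2 i j hi hj
    have hji : j - i ≠ 0 := fun h => hne (by linear_combination h)
    have hij : i - j ≠ 0 := fun h => hne (by linear_combination -h)
    have hv1 : (j - i).val ≠ 0 := fun h => hji ((ZMod.val_eq_zero _).mp h)
    have hv2 : (i - j).val ≠ 0 := fun h => hij ((ZMod.val_eq_zero _).mp h)
    have hlt : (j - i).val < 3 ∨ (i - j).val < 3 := by omega
    rcases hlt with h3 | h3
    · interval_cases h : (j - i).val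
      · exact hv1 rfl
      · have : j - i = 1 := by rw [← cast_val (j - i), h]; norm_num
        exact key1 i j hi hj (by linear_combination this)
      · have : j - i = 2 := by rw [← cast_val (j - i), h]; norm_num
        exact key i j hi hj (by linear_combination this)
    · interval_cases h : (i - j).val
      · exact hv2 rfl
      · have : i - j = 1 := by rw [← cast_val (i - j), h]; norm_num
        exact key1 j i hj hi (by linear_combination this)
      · have : i - j = 2 := by rw [← cast_val (i - j), h]; norm_num
        exact key j i hj hi (by linear_combination this)
  -- all other cycle vertices are outside S
  have hout : ∀ n : ℕ, 1 ≤ n → n ≤ k - 1 → c (i + n) ∈ (Sᶜ : Set V) := by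
    intro n h1 h2' hmem
    have he := huniq (i + n) hmem
    have hn0 : (n : ZMod k) = 0 := by linear_combination he
    have hd : (k : ℕ) ∣ n := (ZMod.natCast_eq_zero_iff n k).mp hn0
    have := Nat.le_of_dvd (by omega) hd
    omega
  -- reachability along the cycle in G \ S
  have hreach : ∀ n : ℕ, 1 ≤ n → n ≤ k - 1 → ∀ u v : (Sᶜ : Set V),
      (u : V) = c (i + 1) → (v : V) = c (i + (n : ZMod k)) →
      (G.induce (Sᶜ : Set V)).Reachable u v := by
    intro n
    induction n with
    | zero => omega
    | succ n ih =>
      intro h1 h2' u v hu hv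
      rcases Nat.eq_zero_or_pos n with h | h
      · subst h
        have huv : u = v := Subtype.ext (by rw [hu, hv]; norm_num)
        exact huv ▸ SimpleGraph.Reachable.refl u
      · have hm : c (i + (n : ZMod k)) ∈ (Sᶜ : Set V) := hout n h (by omega)
        refine (ih h (by omega) u ⟨_, hm⟩ hu rfl).trans (SimpleGraph.Adj.reachable ?_)
        show G.Adj (c (i + (n : ZMod k))) ↑v
        rw [hv]
        have := hadj (i + (n : ZMod k))
        convert this using 2
        push_cast
        ring
  -- derive the contradiction via the splitting condition
  have hm1 : c (i + 1) ∈ (Sᶜ : Set V) := by simpa using hout 1 le_rfl (by omega)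
  have hm2 : c (i + ((k - 1 : ℕ) : ZMod k)) ∈ (Sᶜ : Set V) := hout (k - 1) (by omega) le_rfl
  have hr := hreach (k - 1) (by omega) le_rfl ⟨_, hm1⟩ ⟨_, hm2⟩ rfl rfl
  have hkm : ((k - 1 : ℕ) : ZMod k) = -1 := by
    rw [Nat.cast_sub (by omega)]
    simp
  have a2 : G.Adj (c i) (c (i + ((k - 1 : ℕ) : ZMod k))) := by
    rw [hkm]
    have := (hadj (i - 1)).symm
    convert this using 2
    · ring
    · ring
  have heq := hS.1.2 (c i) hi ⟨_, hm1⟩ ⟨_, hm2⟩ hr (hadj i) a2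
  have hc : c (i + 1) = c (i + ((k - 1 : ℕ) : ZMod k)) := congrArg Subtype.val heq
  have := hinj hc
  rw [hkm] at this
  exact h2z (by linear_combination this)
end

section
/- Every forest is Descartes-like: every nonempty induced subgraph of a forest contains a non-empty strong splitting stable set. -/
/-- An induced subgraph of an acyclic graph is acyclic. -/
lemma induce_isAcyclic {V : Type*} {G : SimpleGraph V} (h : G.IsAcyclic) (s : Set V) :
    (G.induce s).IsAcyclic := by
  intro v c hc
  let e : G.induce s ↪g G := SimpleGraph.Embedding.induce s
  exact h (c.map e.toHom) (hc.map e.injective)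

/-- every forest is Descartes-like. -/
theorem forest_descartesLike {V : Type*} (G : SimpleGraph V) (h : G.IsAcyclic) :
    G.DescartesLike := by
  classical
  intro X hX
  obtain ⟨x, hx⟩ := hX
  set H := G.induce X with hHdef
  have hHa : H.IsAcyclic := induce_isAcyclic h X
  set x0 : X := ⟨x, hx⟩
  refine ⟨{x0}, Set.singleton_nonempty _, ⟨⟨?_, ?_⟩, ?_⟩⟩
  · intro u hu v hv
    rcases hu with rfl
    rcases hv with rfl
    exact H.irrefl
  · intro a ha u v hr hu hv
    rcases ha with rfl
    by_contra hne
    obtain ⟨w⟩ := hr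
    let emb : H.induce ({x0}ᶜ : Set X) ↪g H := SimpleGraph.Embedding.induce ({x0}ᶜ : Set X)
    have hw' : H.Walk ↑u ↑v := w.map emb.toHom
    have hxw : (x0 : X) ∉ (w.map emb.toHom).support := by
      rw [SimpleGraph.Walk.support_map]
      intro hmem
      obtain ⟨y, _, hy⟩ := List.mem_map.mp hmem
      exact y.2 (by simpa [emb] using hy)
    let w' : H.Walk ↑u ↑v := w.map emb.toHom
    have hxw' : (x0 : X) ∉ w'.support := hxw
    set p := w'.toPath with hp
    have hxp : (x0 : X) ∉ (p : H.Walk ↑u ↑v).support :=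
      fun hmem => hxw' (SimpleGraph.Walk.support_toPath_subset _ hmem)
    have hp2 : (SimpleGraph.Walk.cons hu (p : H.Walk ↑u ↑v)).IsPath :=
      p.2.cons hxp
    have hpaths := SimpleGraph.isAcyclic_iff_path_unique.mp hHa
      (SimpleGraph.Path.singleton hv) ⟨SimpleGraph.Walk.cons hu (p : H.Walk ↑u ↑v), hp2⟩
    have hmemu : (u : X) ∈ (SimpleGraph.Path.singleton hv :
        H.Path (x0 : X) (v : X)).1.support := by
      rw [hpaths]
      exact List.mem_cons_of_mem _ (SimpleGraph.Walk.start_mem_support _)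
    simp [SimpleGraph.Path.singleton] at hmemu
    rcases hmemu with hmemu | hmemu
    · exact u.2 (by simp [hmemu])
    · exact hne (Subtype.ext hmemu)
  · intro v _ a ha b hb _ _
    rcases ha with rfl
    rcases hb with rfl
    rfl
end

section
/- If G is a d-regular graph on n vertices such that every stable set has at most (λ/d)·n vertices and every vertex subset W with |W| < n/2 satisfies |N(W)| ≥ c|W| with c = (d−λ)/(2d), and if moreover d > λ, 1 − λ/d ≥ 1/2, and 4λ/(d−λ) ≤ 1/2, and every partition of V(G) into B and C has at least ((d−λ)/n)·|B|·|C| edges between B and C, then G has no non-empty splitting stable set. -/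
open Finset in
lemma exists_medium_subset {α : Type*} [DecidableEq α] (s : Finset α) (f : α → ℕ) (n : ℕ)
    (hn : 0 < n) (hsmall : ∀ a ∈ s, 4 * f a < n) (hbig : n ≤ 2 * ∑ a ∈ s, f a) :
    ∃ t ⊆ s, n ≤ 4 * ∑ a ∈ t, f a ∧ 2 * ∑ a ∈ t, f a < n := by
  classical
  have hP : s ∈ s.powerset.filter (fun t => n ≤ 4 * ∑ a ∈ t, f a) := by
    simp only [Finset.mem_filter, Finset.mem_powerset]
    refine ⟨subset_rfl, by omega⟩
  obtain ⟨t, ht, hmin⟩ := Finset.exists_min_image _ (fun t => ∑ a ∈ t, f a) ⟨s, hP⟩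
  simp only [Finset.mem_filter, Finset.mem_powerset] at ht
  refine ⟨t, ht.1, ht.2, ?_⟩
  by_contra hge
  push_neg at hge
  obtain ⟨a, ha, hfa⟩ : ∃ a ∈ t, 0 < f a := by
    by_contra h
    push_neg at h
    have hz : ∑ a ∈ t, f a = 0 := Finset.sum_eq_zero (fun a ha => by have := h a ha; omega)
    omega
  have hsum : f a + ∑ x ∈ t.erase a, f x = ∑ x ∈ t, f x := Finset.add_sum_erase t f ha
  have hfan : 4 * f a < n := hsmall a (ht.1 ha)
  have hmem : t.erase a ∈ s.powerset.filter (fun t => n ≤ 4 * ∑ a ∈ t, f a) := by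
    simp only [Finset.mem_filter, Finset.mem_powerset]
    refine ⟨(Finset.erase_subset _ _).trans ht.1, by omega⟩
  have := hmin _ hmem
  omega


set_option maxHeartbeats 1000000 in
open Finset in
/-- a d-regular graph on n vertices in which every stable set has at most
(λ/d)·n vertices, every vertex subset W with |W| < n/2 satisfies |N(W)| ≥ ((d−λ)/(2d))|W|,
every partition into B and C has at least ((d−λ)/n)|B||C| edges between the parts, and
d > λ, 1 − λ/d ≥ 1/2, 4λ/(d−λ) ≤ 1/2 (with λ > 1), has no nonempty splitting stable
set. -/
theorem expander_no_splitting {V : Type*} [Fintype V] [DecidableEq V]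
    (G : SimpleGraph V) [DecidableRel G.Adj] (d : ℕ) (lam : ℝ) (hlam : 1 < lam)
    (hreg : ∀ v : V, G.degree v = d)
    (hd : lam < d)
    (h2 : (1 : ℝ) - lam / d ≥ 1 / 2)
    (h3 : 4 * lam / (d - lam) ≤ 1 / 2)
    (hindep : ∀ A : Finset V, G.IsStableSet ↑A →
      (A.card : ℝ) ≤ lam / d * Fintype.card V)
    (hexp : ∀ W : Finset V, (W.card : ℝ) < (Fintype.card V : ℝ) / 2 →
      ((d : ℝ) - lam) / (2 * d) * W.card ≤
        ((Finset.univ.filter fun v => v ∉ W ∧ ∃ w ∈ W, G.Adj v w).card : ℝ))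
    (hedges : ∀ B : Finset V,
      ((d : ℝ) - lam) / Fintype.card V * B.card * Bᶜ.card ≤
        ((G.interedges B Bᶜ).card : ℝ)) :
    ¬ ∃ A : Set V, A.Nonempty ∧ G.IsSplitting A := by
  classical
  rintro ⟨A, hAne, hstab, hsplit⟩
  have : Nonempty V := ⟨hAne.some⟩
  set n := Fintype.card V with hn
  have hnpos : 0 < n := Fintype.card_pos
  have hnR : (0:ℝ) < n := by exact_mod_cast hnpos
  have hd0 : (0:ℝ) < d := lt_trans (by linarith) hd
  have hdl : (0:ℝ) < (d:ℝ) - lam := by linarith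
  have h8 : 8 * lam ≤ (d:ℝ) - lam := by
    rw [div_le_iff₀ hdl] at h3; linarith
  set A' : Finset V := A.toFinset with hA'def
  have hmemA' : ∀ v, v ∈ A' ↔ v ∈ A := fun v => Set.mem_toFinset
  have hA'stab : G.IsStableSet (↑A' : Set V) := by
    rw [hA'def, Set.coe_toFinset]; exact hstab
  have hA'card : (A'.card : ℝ) ≤ lam / d * n := hindep A' hA'stab
  have hA'pos : 0 < A'.card := by
    obtain ⟨a, ha⟩ := hAne
    exact Finset.card_pos.2 ⟨a, (hmemA' a).2 ha⟩
  have hApos : (0:ℝ) < A'.card := by exact_mod_cast hA'pos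
  -- components of G - A
  haveI : Fintype ↥(Aᶜ : Set V) := Fintype.ofFinite _
  haveI : Fintype (G.induce (Aᶜ : Set V)).ConnectedComponent := Fintype.ofFinite _
  set cmk : ↥(Aᶜ : Set V) → (G.induce (Aᶜ : Set V)).ConnectedComponent :=
    (G.induce (Aᶜ : Set V)).connectedComponentMk with hcmk
  set comp : (G.induce (Aᶜ : Set V)).ConnectedComponent → Finset V :=
    fun K => Finset.univ.filter fun v => ∃ h : v ∈ (Aᶜ : Set V), cmk ⟨v, h⟩ = K with hcompdef
  have hmemcomp : ∀ K v, v ∈ comp K ↔ ∃ h : v ∈ (Aᶜ : Set V), cmk ⟨v, h⟩ = K := by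
    intro K v
    simp only [hcompdef, Finset.mem_filter, Finset.mem_univ, true_and]
  have hcompA : ∀ K, ∀ v ∈ comp K, v ∉ A := by
    intro K v hv
    obtain ⟨h, _⟩ := (hmemcomp K v).1 hv
    exact h
  have hreach : ∀ K, ∀ u ∈ comp K, ∀ v ∈ comp K,
      ∃ (hu : u ∈ (Aᶜ:Set V)) (hv : v ∈ (Aᶜ:Set V)),
        (G.induce (Aᶜ:Set V)).Reachable ⟨u,hu⟩ ⟨v,hv⟩ := by
    intro K u hu v hv
    obtain ⟨h1, e1⟩ := (hmemcomp K u).1 hu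
    obtain ⟨h2, e2⟩ := (hmemcomp K v).1 hv
    exact ⟨h1, h2, SimpleGraph.ConnectedComponent.exact (e1.trans e2.symm)⟩
  have hclosed : ∀ K, ∀ u ∈ comp K, ∀ v, G.Adj u v → v ∉ A → v ∈ comp K := by
    intro K u hu v hadj hvA
    obtain ⟨h1, e1⟩ := (hmemcomp K u).1 hu
    have hv : v ∈ (Aᶜ : Set V) := hvA
    refine (hmemcomp K v).2 ⟨hv, ?_⟩
    rw [← e1]
    exact SimpleGraph.ConnectedComponent.connectedComponentMk_eq_of_adj
      (by exact hadj.symm : (G.induce (Aᶜ:Set V)).Adj ⟨v,hv⟩ ⟨u,h1⟩)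
  have hdisj : ∀ K K', K ≠ K' → Disjoint (comp K) (comp K') := by
    intro K K' hne
    rw [Finset.disjoint_left]
    intro v hv hv'
    obtain ⟨h1, e1⟩ := (hmemcomp K v).1 hv
    obtain ⟨h2, e2⟩ := (hmemcomp K' v).1 hv'
    exact hne (e1.symm.trans e2)
  have hcover : Finset.univ.biUnion comp = A'ᶜ := by
    ext v
    simp only [Finset.mem_biUnion, Finset.mem_univ, true_and, Finset.mem_compl, hmemA']
    constructor
    · rintro ⟨K, hv⟩; exact hcompA K v hv
    · intro hv
      exact ⟨cmk ⟨v, hv⟩, (hmemcomp _ _).2 ⟨hv, rfl⟩⟩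
  have hsumcomp : ∑ K, (comp K).card = n - A'.card := by
    rw [← Finset.card_biUnion (fun K _ K' h hKK' => hdisj K K' hKK'), hcover,
      Finset.card_compl]
  -- every edge leaving a union of components lands in A
  have hcut : ∀ t : Finset (G.induce (Aᶜ : Set V)).ConnectedComponent,
      ∀ p ∈ G.interedges (t.biUnion comp) (t.biUnion comp)ᶜ, p.2 ∈ A' := by
    intro t p hp
    rw [SimpleGraph.mem_interedges_iff] at hp
    obtain ⟨hp1, hp2, hadj⟩ := hp
    rw [Finset.mem_biUnion] at hp1
    obtain ⟨K, hKt, hu⟩ := hp1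
    by_contra hvA
    rw [hmemA'] at hvA
    exact (Finset.mem_compl.1 hp2)
      (Finset.mem_biUnion.2 ⟨K, hKt, hclosed K p.1 hu p.2 hadj hvA⟩)
  -- bound: single component cut is at most |A|
  have hcut1 : ∀ K, (G.interedges (comp K) (comp K)ᶜ).card ≤ A'.card := by
    intro K
    have hsb : ({K} : Finset _).biUnion comp = comp K := Finset.singleton_biUnion
    have hsnd : ∀ p ∈ G.interedges (comp K) (comp K)ᶜ, p.2 ∈ A' := by
      intro p hp
      exact hcut {K} p (by rwa [hsb])
    apply Finset.card_le_card_of_injOn Prod.snd hsnd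
    intro p hp q hq hpq
    rw [Finset.mem_coe] at hp hq
    have hap : p.2 ∈ A := (hmemA' _).1 (hsnd p hp)
    rw [SimpleGraph.mem_interedges_iff] at hp hq
    obtain ⟨hp1, hp2, hpadj⟩ := hp
    obtain ⟨hq1, hq2, hqadj⟩ := hq
    obtain ⟨hu, hv, hr⟩ := hreach K p.1 hp1 q.1 hq1
    have h1 : (⟨p.1, hu⟩ : ↥(Aᶜ : Set V)) = ⟨q.1, hv⟩ :=
      hsplit p.2 hap ⟨p.1, hu⟩ ⟨q.1, hv⟩ hr hpadj.symm (by rw [hpq]; exact hqadj.symm)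
    exact Prod.ext (congrArg Subtype.val h1) hpq
  -- bound: any union-of-components cut is at most d * |A|
  have hcutU : ∀ t : Finset (G.induce (Aᶜ : Set V)).ConnectedComponent,
      (G.interedges (t.biUnion comp) (t.biUnion comp)ᶜ).card ≤ d * A'.card := by
    intro t
    have hsub : G.interedges (t.biUnion comp) (t.biUnion comp)ᶜ ⊆
        A'.biUnion (fun a => (G.neighborFinset a).image fun u => (u, a)) := by
      intro p hp
      have ha := hcut t p hp
      rw [SimpleGraph.mem_interedges_iff] at hp
      refine Finset.mem_biUnion.2 ⟨p.2, ha, Finset.mem_image.2 ⟨p.1, ?_, ?_⟩⟩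
      · rw [SimpleGraph.mem_neighborFinset]; exact hp.2.2.symm
      · exact Prod.ext rfl rfl
    calc (G.interedges (t.biUnion comp) (t.biUnion comp)ᶜ).card
        ≤ (A'.biUnion (fun a => (G.neighborFinset a).image fun u => (u, a))).card :=
          Finset.card_le_card hsub
      _ ≤ ∑ a ∈ A', ((G.neighborFinset a).image fun u => (u, a)).card :=
          Finset.card_biUnion_le
      _ ≤ ∑ a ∈ A', d := Finset.sum_le_sum (fun a _ => by
          refine Finset.card_image_le.trans ?_
          rw [SimpleGraph.card_neighborFinset_eq_degree, hreg])
      _ = d * A'.card := by rw [Finset.sum_const, smul_eq_mul, mul_comm]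
  -- |A| is at most half of n
  have hld : lam / d ≤ 1/2 := by linarith
  have hdA : (d:ℝ) * A'.card ≤ lam * n := by
    calc (d:ℝ) * A'.card ≤ (d:ℝ) * (lam / d * n) := by nlinarith
      _ = lam * n := by field_simp
  by_cases hbigK : ∃ K, n ≤ 4 * (comp K).card
  · -- Case 1: a huge component
    obtain ⟨K, hK⟩ := hbigK
    have he := hedges (comp K)
    have hle : ((G.interedges (comp K) (comp K)ᶜ).card : ℝ) ≤ A'.card := by
      exact_mod_cast hcut1 K
    have hAsub : A' ⊆ (comp K)ᶜ := fun v hv =>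
      Finset.mem_compl.2 (fun hc => hcompA K v hc ((hmemA' v).1 hv))
    have h1 : (A'.card : ℝ) ≤ ((comp K)ᶜ.card : ℝ) := by
      exact_mod_cast Finset.card_le_card hAsub
    have h2' : (n : ℝ) ≤ 4 * (comp K).card := by exact_mod_cast hK
    have he2 : ((d:ℝ) - lam) / n * (comp K).card * (comp K)ᶜ.card ≤ A'.card :=
      le_trans he hle
    have key : ((d:ℝ) - lam) * ((comp K).card * (comp K)ᶜ.card) ≤ n * A'.card := by
      rw [div_mul_eq_mul_div, div_mul_eq_mul_div, div_le_iff₀ hnR] at he2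
      linarith
    have hx : (0:ℝ) < (comp K).card := by linarith
    have c1 : ((d:ℝ)-lam) * ((comp K).card * A'.card) ≤ (n:ℝ) * A'.card := by
      refine le_trans ?_ key
      exact mul_le_mul_of_nonneg_left (mul_le_mul_of_nonneg_left h1 hx.le) hdl.le
    have c2 : 2 * lam * ((n:ℝ) * A'.card) ≤ ((d:ℝ)-lam) * ((comp K).card * A'.card) := by
      have hh := mul_le_mul h8
        (mul_le_mul_of_nonneg_right (by linarith : (n:ℝ)/4 ≤ (comp K).card) hApos.le)
        (by nlinarith : (0:ℝ) ≤ (n:ℝ)/4 * A'.card) hdl.le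
      linarith
    nlinarith [mul_pos (by linarith : (0:ℝ) < lam - 1) (mul_pos hnR hApos),
      mul_pos hnR hApos]
  · -- Case 2: all components are small, take a medium union
    push_neg at hbigK
    have hhalf : 2 * A'.card ≤ n := by
      have hr : ((2 * A'.card : ℕ) : ℝ) ≤ (n:ℝ) := by
        push_cast
        nlinarith
      exact_mod_cast hr
    have hbigsum : n ≤ 2 * ∑ K, (comp K).card := by
      rw [hsumcomp]; omega
    obtain ⟨t, _, htlo, hthi⟩ := exists_medium_subset Finset.univ
      (fun K => (comp K).card) n hnpos (fun a _ => hbigK a) hbigsum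
    set U := t.biUnion comp with hUdef
    have hUcard : U.card = ∑ K ∈ t, (comp K).card :=
      Finset.card_biUnion (fun K _ K' _ h => hdisj K K' h)
    have he := hedges U
    have hle : ((G.interedges U Uᶜ).card : ℝ) ≤ (d:ℝ) * A'.card := by
      exact_mod_cast hcutU t
    have hUn : U.card ≤ n := Finset.card_le_univ U
    have n1 : n ≤ 4 * U.card := by rw [hUcard]; exact htlo
    have n2 : 2 * U.card < n := by rw [hUcard]; exact hthi
    have r1 : (n:ℝ) ≤ 4 * U.card := by exact_mod_cast n1
    have r2 : 2 * (U.card:ℝ) < n := by exact_mod_cast n2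
    have r3 : ((Uᶜ : Finset V).card : ℝ) = (n:ℝ) - U.card := by
      rw [Finset.card_compl]
      rw [← hn, Nat.cast_sub hUn]
    have he2 : ((d:ℝ) - lam) / n * U.card * (Uᶜ : Finset V).card ≤ lam * n :=
      le_trans he (le_trans hle hdA)
    have key : ((d:ℝ) - lam) * (U.card * (Uᶜ : Finset V).card) ≤ lam * n * n := by
      rw [div_mul_eq_mul_div, div_mul_eq_mul_div, div_le_iff₀ hnR] at he2
      linarith
    have hxU : (0:ℝ) < U.card := by linarith
    have s1 : ((d:ℝ)-lam) * (U.card * ((n:ℝ)/2)) < ((d:ℝ)-lam) * (U.card * (Uᶜ : Finset V).card) := by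
      apply mul_lt_mul_of_pos_left _ hdl
      apply mul_lt_mul_of_pos_left _ hxU
      rw [r3]; linarith
    have s2 : lam * n * n ≤ ((d:ℝ)-lam) * (U.card * ((n:ℝ)/2)) := by
      have f1 : 8 * lam * ((n:ℝ)/4) ≤ ((d:ℝ)-lam) * U.card :=
        mul_le_mul h8 (by linarith : (n:ℝ)/4 ≤ U.card) (by linarith) hdl.le
      have f2 := mul_le_mul_of_nonneg_right f1 (by linarith : (0:ℝ) ≤ (n:ℝ)/2)
      linarith
    linarith
end
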